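/- The operators S_{i,s} on ℓ²(𝔽_{n₁}⁺×⋯×𝔽_{n_k}⁺) are isometries with pairwise orthogonal ranges for each fixed i; for each i∈{1,…,k}, Σ_{s=1}^{n_i} S_{i,s}S_{i,s}* χ_{(α₁,…,α_k)} equals χ_{(α₁,…,α_k)} if |α_i|≥1 and 0 if α_i=g₀ (so each 𝐒_i=[S_{i,1}⋯S_{i,n_i}] is a row isometry); and S_{i,s}* S_{j,t} = conj(λ_{ij}(s,t)) S_{j,t} S_{i,s}* for all i≠j, s∈{1,…,n_i}, t∈{1,…,n_j}; consequently 𝐒=(𝐒₁,…,𝐒_k) is a k-tuple of doubly Λ-commuting row isometries. -/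

import Mathlib

open scoped InnerProductSpace ENNReal ComplexConjugate
open Filter Topology ContinuousLinearMap

set_option maxHeartbeats 400000
set_option synthInstance.maxHeartbeats 100000

noncomputable section

namespace Polyball

/-! ## Basic setup: words, the Hilbert space `ℓ²(𝔽_{n₁}⁺×⋯×𝔽_{n_k}⁺)` and fibered versions. -/

variable {k : ℕ}

/-- A point of `𝔽_{n₁}⁺ × ⋯ × 𝔽_{n_k}⁺`: a `k`-tuple of words. -/
abbrev Word (n : Fin k → ℕ) : Type := ∀ i, List (Fin (n i))

/-- total length `|β₁| + ⋯ + |β_k|` -/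
def totalLen {n : Fin k → ℕ} (β : Word n) : ℕ := ∑ i, (β i).length

/-- `ℓ²(𝔽_{n₁}⁺×⋯×𝔽_{n_k}⁺) ⊗ D`, realized as `D`-valued `ℓ²`. -/
abbrev L2 (n : Fin k → ℕ) (D : Type*) [NormedAddCommGroup D] [InnerProductSpace ℂ D] :
    Type _ := lp (fun _ : Word n => D) 2

/-- the standard orthonormal basis vector `χ_α`. -/
def chi {n : Fin k → ℕ} (α : Word n) : L2 n ℂ := lp.single 2 α 1

section elem

variable {n : Fin k → ℕ} {D D' : Type*} [NormedAddCommGroup D] [InnerProductSpace ℂ D]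
  [NormedAddCommGroup D'] [InnerProductSpace ℂ D']

lemma memℓp_elem (x : L2 n ℂ) (d : D) : Memℓp (fun w => x w • d) 2 := by
  apply memℓp_gen
  have hx : Summable fun w => ‖x w‖ ^ (2 : ℝ≥0∞).toReal :=
    (memℓp_gen_iff (by norm_num)).1 (lp.memℓp x)
  have := hx.mul_right (‖d‖ ^ (2 : ℝ≥0∞).toReal)
  refine this.congr fun w => ?_
  rw [norm_smul, Real.mul_rpow (norm_nonneg _) (norm_nonneg _)]

/-- the elementary tensor `x ⊗ d` in `ℓ² ⊗ D`. -/
def elem (x : L2 n ℂ) (d : D) : L2 n D := ⟨fun w => x w • d, memℓp_elem x d⟩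

/-- `B` is the ampliation `A ⊗ I_D`. -/
def IsAmpliation (A : L2 n ℂ →L[ℂ] L2 n ℂ) (B : L2 n D →L[ℂ] L2 n D) : Prop :=
  ∀ x d, B (elem x d) = elem (A x) d

lemma memℓp_ampR (V : D →L[ℂ] D') (f : L2 n D) : Memℓp (fun w => V (f w)) 2 := by
  apply memℓp_gen
  have hf : Summable fun w => ‖f w‖ ^ (2 : ℝ≥0∞).toReal :=
    (memℓp_gen_iff (by norm_num)).1 (lp.memℓp f)
  have h2 := (hf.mul_left (‖V‖ ^ (2 : ℝ≥0∞).toReal))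
  refine Summable.of_nonneg_of_le (fun w => ?_) (fun w => ?_) h2
  · positivity
  · rw [← Real.mul_rpow (norm_nonneg _) (norm_nonneg _)]
    exact Real.rpow_le_rpow (norm_nonneg _) (V.le_opNorm _) (by norm_num)

/-- the ampliation `I_{ℓ²} ⊗ V` of an operator `V : D →L[ℂ] D'`, acting pointwise. -/
def ampR (V : D →L[ℂ] D') : L2 n D →L[ℂ] L2 n D' :=
  LinearMap.mkContinuous
    { toFun := fun f => (⟨fun w => V (f w), memℓp_ampR V f⟩ : L2 n D')
      map_add' := by intro f g; ext w; simp [lp.coeFn_add]; rfl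
      map_smul' := by intro c f; ext w; simp [lp.coeFn_smul] }
    ‖V‖ (by
      intro f
      refine lp.norm_le_of_forall_sum_le (by norm_num) (by positivity) fun s => ?_
      calc ∑ w ∈ s, ‖V (f w)‖ ^ (2 : ℝ≥0∞).toReal
          ≤ ∑ w ∈ s, (‖V‖ * ‖f w‖) ^ (2 : ℝ≥0∞).toReal := by
            refine Finset.sum_le_sum fun w _ => ?_
            exact Real.rpow_le_rpow (norm_nonneg _) (V.le_opNorm _) (by norm_num)
        _ = ‖V‖ ^ (2 : ℝ≥0∞).toReal * ∑ w ∈ s, ‖f w‖ ^ (2 : ℝ≥0∞).toReal := by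
            rw [Finset.mul_sum]
            refine Finset.sum_congr rfl fun w _ => ?_
            rw [Real.mul_rpow (norm_nonneg _) (norm_nonneg _)]
        _ ≤ ‖V‖ ^ (2 : ℝ≥0∞).toReal * ‖f‖ ^ (2 : ℝ≥0∞).toReal := by
            refine mul_le_mul_of_nonneg_left ?_ (by positivity)
            exact lp.sum_rpow_le_norm_rpow (by norm_num) f s
        _ = (‖V‖ * ‖f‖) ^ (2 : ℝ≥0∞).toReal := by
            rw [Real.mul_rpow (norm_nonneg _) (norm_nonneg _)])

end elem

/-! ## Λ-data and the twisted shifts -/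

/-- The data `Λ = (Λ_{ij})` of unimodular twisting matrices with `Λ_{ji} = Λ_{ij}*`. -/
structure LambdaData (n : Fin k → ℕ) where
  lam : ∀ i j : Fin k, Fin (n i) → Fin (n j) → ℂ
  unimodular : ∀ i j s t, ‖lam i j s t‖ = 1
  hermitian : ∀ i j s t, i ≠ j → lam j i t s = conj (lam i j s t)

variable {n : Fin k → ℕ}

/-- `𝛌_{i,j}(s,β) = ∏_b λ_{ij}(s, j_b)`. -/
def boldLam (Λ : LambdaData n) (i j : Fin k) (s : Fin (n i)) (β : List (Fin (n j))) : ℂ :=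
  (β.map fun t => Λ.lam i j s t).prod

/-- the twist `𝛌_{i,1}(s,α₁)⋯𝛌_{i,i-1}(s,α_{i-1})`. -/
def twist (Λ : LambdaData n) (i : Fin k) (s : Fin (n i)) (α : Word n) : ℂ :=
  ∏ j : Fin k, if j < i then boldLam Λ i j s (α j) else 1

/-- `S` is the `k`-tuple of twisted shifts (the universal model) associated with `Λ`. -/
def IsTwistedShift (Λ : LambdaData n) (S : ∀ i, Fin (n i) → L2 n ℂ →L[ℂ] L2 n ℂ) : Prop :=
  ∀ (i : Fin k) (s : Fin (n i)) (α : Word n),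
    S i s (chi α) = twist Λ i s α • chi (Function.update α i (s :: α i))

/-! ## Tuples of operators, the maps `Φ`, `Δ`, and the regular Λ-polyball -/

section tuples

variable {H : Type*} [NormedAddCommGroup H] [InnerProductSpace ℂ H] [CompleteSpace H]

/-- `T_{i,α} := T_{i,p₁} ⋯ T_{i,p_m}` for a word `α = g_{p₁}⋯g_{p_m}`. -/
def wordOp (T : ∀ i, Fin (n i) → H →L[ℂ] H) (i : Fin k) (α : List (Fin (n i))) : H →L[ℂ] H :=
  (α.map fun s => T i s).prod

/-- `T_β := T_{1,β₁} T_{2,β₂} ⋯ T_{k,β_k}` for `β ∈ 𝔽_{n₁}⁺×⋯×𝔽_{n_k}⁺`. -/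
def fullOp (T : ∀ i, Fin (n i) → H →L[ℂ] H) (β : Word n) : H →L[ℂ] H :=
  ((List.finRange k).map fun i => wordOp T i (β i)).prod

/-- `Φ_{T_i}(X) = Σ_s T_{i,s} X T_{i,s}^*`. -/
def Phi (T : ∀ i, Fin (n i) → H →L[ℂ] H) (i : Fin k) (X : H →L[ℂ] H) : H →L[ℂ] H :=
  ∑ s : Fin (n i), T i s ∘L X ∘L adjoint (T i s)

/-- `Δ_T(X) = (id - Φ_{T_k}) ∘ ⋯ ∘ (id - Φ_{T_1})(X)`. -/
def DeltaMap (T : ∀ i, Fin (n i) → H →L[ℂ] H) (X : H →L[ℂ] H) : H →L[ℂ] H :=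
  (List.finRange k).foldl (fun Y i => Y - Phi T i Y) X

/-- `(id - Φ_{T_k}^{p_k}) ∘ ⋯ ∘ (id - Φ_{T_1}^{p₁})(I)`. -/
def partialDelta (T : ∀ i, Fin (n i) → H →L[ℂ] H) (p : Fin k → ℕ) : H →L[ℂ] H :=
  (List.finRange k).foldl (fun Y i => Y - (Phi T i)^[p i] Y) 1

/-- the scaled tuple `rT`. -/
def scale (r : ℝ) (T : ∀ i, Fin (n i) → H →L[ℂ] H) : ∀ i, Fin (n i) → H →L[ℂ] H :=
  fun i s => (r : ℂ) • T i s

/-- membership in the regular Λ-polyball `𝐁_Λ(H)`. -/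
structure InPolyball (Λ : LambdaData n) (T : ∀ i, Fin (n i) → H →L[ℂ] H) : Prop where
  contraction : ∀ i, ((1 : H →L[ℂ] H) - Phi T i 1).IsPositive
  comm : ∀ i j, i ≠ j → ∀ s t, T i s ∘L T j t = Λ.lam i j s t • (T j t ∘L T i s)
  regular : ∀ r : ℝ, 0 ≤ r → r < 1 → (DeltaMap (scale r T) 1).IsPositive

/-- membership in the open polyball `𝐁_Λ°(H)`: `Δ_T(I)` is an invertible positive operator. -/
def InOpenPolyball (Λ : LambdaData n) (T : ∀ i, Fin (n i) → H →L[ℂ] H) : Prop :=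
  InPolyball Λ T ∧ (DeltaMap T 1).IsPositive ∧ IsUnit (DeltaMap T 1)

/-- purity: `Φ_{T_i}^p(I) → 0` strongly. -/
def IsPure (T : ∀ i, Fin (n i) → H →L[ℂ] H) : Prop :=
  ∀ (i : Fin k) (x : H), Tendsto (fun p => ((Phi T i)^[p] (1 : H →L[ℂ] H)) x) atTop (𝓝 0)

/-- completely non-coisometric. -/
def CNC (T : ∀ i, Fin (n i) → H →L[ℂ] H) : Prop :=
  ∀ h : H, (∀ p : Fin k → ℕ, ⟪partialDelta T p h, h⟫_ℂ = 0) → h = 0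

/-- `R` is the positive square root of `X`. -/
def IsSqrtOf (R X : H →L[ℂ] H) : Prop := R.IsPositive ∧ R ∘L R = X

/-- the defect space `D(T)`, the closure of the range of `Δ_T(I)`. -/
def defectSpace (T : ∀ i, Fin (n i) → H →L[ℂ] H) : Submodule ℂ H :=
  (LinearMap.range (DeltaMap T (1 : H →L[ℂ] H) : H →ₗ[ℂ] H)).topologicalClosure

instance (T : ∀ i, Fin (n i) → H →L[ℂ] H) : CompleteSpace ↥(defectSpace T) :=
  IsClosed.completeSpace_coe (hs := Submodule.isClosed_topologicalClosure _)

/-- the defect space `D(T)` as a Hilbert space in its own right. -/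
def DTcar (T : ∀ i, Fin (n i) → H →L[ℂ] H) : Type _ := ↥(defectSpace T)

instance (T : ∀ i, Fin (n i) → H →L[ℂ] H) : NormedAddCommGroup (DTcar T) :=
  inferInstanceAs (NormedAddCommGroup ↥(defectSpace T))
instance (T : ∀ i, Fin (n i) → H →L[ℂ] H) : InnerProductSpace ℂ (DTcar T) :=
  inferInstanceAs (InnerProductSpace ℂ ↥(defectSpace T))
instance (T : ∀ i, Fin (n i) → H →L[ℂ] H) : CompleteSpace (DTcar T) :=
  inferInstanceAs (CompleteSpace ↥(defectSpace T))

/-- the inclusion `D(T) ↪ H`. -/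
def inclDT (T : ∀ i, Fin (n i) → H →L[ℂ] H) : DTcar T →L[ℂ] H :=
  (defectSpace T).subtypeL

instance (p : Submodule ℂ H) : CompleteSpace ↥(p.topologicalClosure) :=
  (Submodule.isClosed_topologicalClosure _).completeSpace_coe

instance (K : Submodule ℂ H) : CompleteSpace ↥Kᗮ :=
  (Submodule.isClosed_orthogonal K).completeSpace_coe

/-- `K` is the noncommutative Berezin kernel of `T`:
`K h = Σ_β χ_β ⊗ Δ_T(I)^{1/2} T_β^* h ∈ ℓ² ⊗ D(T)`. -/
def IsBerezinKernel (T : ∀ i, Fin (n i) → H →L[ℂ] H)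
    (K : H →L[ℂ] L2 n (DTcar T)) : Prop :=
  ∃ R : H →L[ℂ] H, IsSqrtOf R (DeltaMap T 1) ∧
    ∀ (h : H) (β : Word n), inclDT T ((K h) β) = R (adjoint (fullOp T β) h)

end tuples

/-! ## polynomials, Hardy algebra, series -/

section algebra

variable {H : Type*} [NormedAddCommGroup H] [InnerProductSpace ℂ H] [CompleteSpace H]

/-- evaluation of noncommutative polynomials at the tuple `T`. -/
def polyEval (T : ∀ i, Fin (n i) → H →L[ℂ] H) :
    FreeAlgebra ℂ (Σ i : Fin k, Fin (n i)) →ₐ[ℂ] (H →L[ℂ] H) :=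
  FreeAlgebra.lift ℂ fun p => T p.1 p.2

/-- the set `𝒫({T_{i,s}})` of all polynomials in the `T_{i,s}` and the identity. -/
def polySet (T : ∀ i, Fin (n i) → H →L[ℂ] H) : Set (H →L[ℂ] H) :=
  Set.range (polyEval T)

/-- `A` has the formal Fourier representation `Σ_β c_β S_β`. -/
def HasFourier (S : ∀ i, Fin (n i) → L2 n ℂ →L[ℂ] L2 n ℂ) (c : Word n → ℂ)
    (A : L2 n ℂ →L[ℂ] L2 n ℂ) : Prop :=
  Memℓp c 2 ∧ ∀ γ : Word n, HasSum (fun β => c β • fullOp S β (chi γ)) (A (chi γ))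

/-- the noncommutative Hardy algebra `F^∞(𝐁_Λ)`. -/
def FInfty (S : ∀ i, Fin (n i) → L2 n ℂ →L[ℂ] L2 n ℂ) : Set (L2 n ℂ →L[ℂ] L2 n ℂ) :=
  {A | ∃ c, HasFourier S c A}

/-- the homogeneous part of degree `p` of the series `Σ_β c_β T_β`. -/
def degSum (T : ∀ i, Fin (n i) → H →L[ℂ] H) (c : Word n → ℂ) (p : ℕ) : H →L[ℂ] H :=
  ∑' β : {β : Word n // totalLen β = p}, c β.1 • fullOp T β.1

/-- the coefficients of `φ({r T_{i,s}})`, i.e. `r^{|β|} c_β`. -/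
def rCoeff (r : ℝ) (c : Word n → ℂ) : Word n → ℂ := fun β => (r : ℂ) ^ totalLen β * c β

/-- `Σ_{p≥0} f p` converges (partial sums) to `B` in operator norm. -/
def SeriesTo (f : ℕ → (H →L[ℂ] H)) (B : H →L[ℂ] H) : Prop :=
  Tendsto (fun N => ∑ p ∈ Finset.range N, f p) atTop (𝓝 B)

end algebra

/-! ## operator topologies via nets -/

section topologies

variable {H : Type*} [NormedAddCommGroup H] [InnerProductSpace ℂ H] [CompleteSpace H]

/-- convergence in the strong operator topology along a filter. -/
def SOTTendsto {ι : Type*} (l : Filter ι) (F : ι → (H →L[ℂ] H)) (A : H →L[ℂ] H) : Prop :=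
  ∀ x : H, Tendsto (fun i => F i x) l (𝓝 (A x))

/-- convergence in the weak operator topology along a filter. -/
def WOTTendsto {ι : Type*} (l : Filter ι) (F : ι → (H →L[ℂ] H)) (A : H →L[ℂ] H) : Prop :=
  ∀ x y : H, Tendsto (fun i => ⟪F i x, y⟫_ℂ) l (𝓝 ⟪A x, y⟫_ℂ)

/-- convergence in the w*-topology (σ-weak topology) along a filter. -/
def WstarTendsto {ι : Type*} (l : Filter ι) (F : ι → (H →L[ℂ] H)) (A : H →L[ℂ] H) : Prop :=
  ∀ x y : ℕ → H, Summable (fun j => ‖x j‖ ^ 2) → Summable (fun j => ‖y j‖ ^ 2) →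
    Tendsto (fun i => ∑' j, ⟪F i (x j), y j⟫_ℂ) l (𝓝 (∑' j, ⟪A (x j), y j⟫_ℂ))

/-- membership in the SOT-closure of a set of operators. -/
def InSOTClosure (𝒮 : Set (H →L[ℂ] H)) (A : H →L[ℂ] H) : Prop :=
  ∃ (ι : Type) (l : Filter ι), l.NeBot ∧ ∃ F : ι → (H →L[ℂ] H),
    (∀ i, F i ∈ 𝒮) ∧ SOTTendsto l F A

/-- membership in the WOT-closure of a set of operators. -/
def InWOTClosure (𝒮 : Set (H →L[ℂ] H)) (A : H →L[ℂ] H) : Prop :=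
  ∃ (ι : Type) (l : Filter ι), l.NeBot ∧ ∃ F : ι → (H →L[ℂ] H),
    (∀ i, F i ∈ 𝒮) ∧ WOTTendsto l F A

/-- membership in the w*-closure of a set of operators. -/
def InWstarClosure (𝒮 : Set (H →L[ℂ] H)) (A : H →L[ℂ] H) : Prop :=
  ∃ (ι : Type) (l : Filter ι), l.NeBot ∧ ∃ F : ι → (H →L[ℂ] H),
    (∀ i, F i ∈ 𝒮) ∧ WstarTendsto l F A

end topologies

/-! ## matrices of operators, acting on `H ⊕₂ ⋯ ⊕₂ H` -/

section matrices

variable {H : Type*} [NormedAddCommGroup H] [InnerProductSpace ℂ H] [CompleteSpace H]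

/-- an `m×m` matrix of operators as an operator on the Hilbert space `⊕²_{u<m} H`. -/
def matOp {m : ℕ} (M : Matrix (Fin m) (Fin m) (H →L[ℂ] H)) :
    (PiLp 2 fun _ : Fin m => H) →L[ℂ] (PiLp 2 fun _ : Fin m => H) :=
  ((PiLp.continuousLinearEquiv 2 ℂ fun _ : Fin m => H).symm :
      ((_ : Fin m) → H) →L[ℂ] PiLp 2 fun _ : Fin m => H) ∘L
    (ContinuousLinearMap.pi fun u => ∑ v, M u v ∘L ContinuousLinearMap.proj v) ∘L
    ((PiLp.continuousLinearEquiv 2 ℂ fun _ : Fin m => H) :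
      (PiLp 2 fun _ : Fin m => H) →L[ℂ] ((_ : Fin m) → H))

end matrices

/-! ## further notions: reversed Delta, multi-analytic operators, supports, holomorphic functions -/

section more

variable {H : Type*} [NormedAddCommGroup H] [InnerProductSpace ℂ H] [CompleteSpace H]

/-- `(id - Φ_{T_1}) ∘ ⋯ ∘ (id - Φ_{T_k})(X)` (reversed order). -/
def DeltaMapRev (T : ∀ i, Fin (n i) → H →L[ℂ] H) (X : H →L[ℂ] H) : H →L[ℂ] H :=
  ((List.finRange k).reverse).foldl (fun Y i => Y - Phi T i Y) X

/-- the adjoint, with the scalar field fixed to `ℂ`. -/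
def adj {E F : Type*} [NormedAddCommGroup E] [InnerProductSpace ℂ E]
    [CompleteSpace E] [NormedAddCommGroup F] [InnerProductSpace ℂ F] [CompleteSpace F]
    (V : E →L[ℂ] F) : F →L[ℂ] E :=
  ContinuousLinearMap.adjoint V

/-- a partial isometry between Hilbert spaces. -/
def IsPartialIsometry {E F : Type*} [NormedAddCommGroup E] [InnerProductSpace ℂ E]
    [CompleteSpace E] [NormedAddCommGroup F] [InnerProductSpace ℂ F] [CompleteSpace F]
    (V : E →L[ℂ] F) : Prop :=
  V ∘L adjoint V ∘L V = V

/-- the restriction of an operator to an invariant subspace. -/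
def restrictOp {E : Type*} [NormedAddCommGroup E] [InnerProductSpace ℂ E]
    {M : Submodule ℂ E} (B : E →L[ℂ] E) (h : ∀ x ∈ M, B x ∈ M) : ↥M →L[ℂ] ↥M :=
  ContinuousLinearMap.codRestrict (B ∘L M.subtypeL) M (fun x => h x x.2)

end more

/-- a bundled Hilbert space over `ℂ`. -/
structure HilbertPkg : Type 1 where
  carrier : Type
  [grp : NormedAddCommGroup carrier]
  [ips : InnerProductSpace ℂ carrier]
  [cpl : CompleteSpace carrier]

attribute [instance] HilbertPkg.grp HilbertPkg.ips HilbertPkg.cpl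

section analytic

variable {D F : Type*} [NormedAddCommGroup D] [InnerProductSpace ℂ D] [CompleteSpace D]
  [NormedAddCommGroup F] [InnerProductSpace ℂ F] [CompleteSpace F]

/-- `A` is multi-analytic with respect to the given ampliations of the universal model. -/
def MultiAnalytic (SE : ∀ i, Fin (n i) → L2 n D →L[ℂ] L2 n D)
    (SF : ∀ i, Fin (n i) → L2 n F →L[ℂ] L2 n F)
    (A : L2 n D →L[ℂ] L2 n F) : Prop :=
  ∀ i s, A ∘L SE i s = SF i s ∘L A

/-- a closed subspace reducing for all of the `SD i s`. -/
def ReducedBy (SD : ∀ i, Fin (n i) → L2 n D →L[ℂ] L2 n D)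
    (M : Submodule ℂ (L2 n D)) : Prop :=
  IsClosed (M : Set (L2 n D)) ∧
    ∀ i s, (∀ x ∈ M, SD i s x ∈ M) ∧ ∀ x ∈ M, adjoint (SD i s) x ∈ M

/-- the support of a multi-analytic operator: the smallest reducing subspace containing
the closure of the range of `A*`. -/
def suppOf (SD : ∀ i, Fin (n i) → L2 n D →L[ℂ] L2 n D)
    (A : L2 n D →L[ℂ] L2 n F) : Submodule ℂ (L2 n D) :=
  sInf {M : Submodule ℂ (L2 n D) | ReducedBy SD M ∧ ∀ y, adjoint A y ∈ M}

/-- a Beurling type jointly invariant subspace: the full range of an inner multi-analytic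
operator. -/
def BeurlingType (S : ∀ i, Fin (n i) → L2 n ℂ →L[ℂ] L2 n ℂ)
    (SD : ∀ i, Fin (n i) → L2 n D →L[ℂ] L2 n D) (M : Submodule ℂ (L2 n D)) : Prop :=
  ∃ (P : HilbertPkg) (SL : ∀ i, Fin (n i) → L2 n P.carrier →L[ℂ] L2 n P.carrier),
    (∀ i s, IsAmpliation (S i s) (SL i s)) ∧
    ∃ Ψ : L2 n P.carrier →L[ℂ] L2 n D,
      MultiAnalytic SL SD Ψ ∧ IsPartialIsometry Ψ ∧ (M : Set (L2 n D)) = Set.range Ψ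

end analytic

section holo

variable (Λ : LambdaData n)

/-- `φ = Σ_β a_β Z_β` is a free holomorphic function on `𝐁_Λ°`: the series converges in
operator norm at every point of `𝐁_Λ°(H)`, for every Hilbert space `H`. -/
def FreeHolo (a : Word n → ℂ) : Prop :=
  ∀ (P : HilbertPkg) (X : ∀ i, Fin (n i) → P.carrier →L[ℂ] P.carrier),
    InOpenPolyball Λ X → ∃ B, SeriesTo (degSum X a) B

variable {H : Type*} [NormedAddCommGroup H] [InnerProductSpace ℂ H] [CompleteSpace H]

/-- the value `φ(X)` of the free holomorphic function with coefficients `a` at the tuple `X`. -/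
def holoEval (a : Word n → ℂ) (X : ∀ i, Fin (n i) → H →L[ℂ] H) : H →L[ℂ] H := by
  classical exact if h : ∃ B, SeriesTo (degSum X a) B then h.choose else 0

/-- the set of values `‖φ(X)‖`, over all Hilbert spaces and all `X ∈ 𝐁_Λ°(H)`. -/
def holoNormSet (a : Word n → ℂ) : Set ℝ :=
  {c | ∃ (P : HilbertPkg) (X : ∀ i, Fin (n i) → P.carrier →L[ℂ] P.carrier),
    InOpenPolyball Λ X ∧ c = ‖holoEval a X‖}

/-- the set of values `‖[φ_{uv}(X)]‖` for a matrix of free holomorphic functions. -/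
def holoMatNormSet {m : ℕ} (a : Fin m → Fin m → Word n → ℂ) : Set ℝ :=
  {c | ∃ (P : HilbertPkg) (X : ∀ i, Fin (n i) → P.carrier →L[ℂ] P.carrier),
    InOpenPolyball Λ X ∧ c = ‖matOp (Matrix.of fun u v => holoEval (a u v) X)‖}

/-- membership in `H^∞(𝐁_Λ°)`. -/
def BddHolo (a : Word n → ℂ) : Prop :=
  FreeHolo Λ a ∧ BddAbove (holoNormSet Λ a)

/-- membership in `A(𝐁_Λ°)`: free holomorphic with a continuous extension to `𝐁_Λ(H)`
for every Hilbert space `H`. -/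
def ContHolo (a : Word n → ℂ) : Prop :=
  FreeHolo Λ a ∧
  ∀ P : HilbertPkg, ∃ g : (∀ i, Fin (n i) → P.carrier →L[ℂ] P.carrier) →
      (P.carrier →L[ℂ] P.carrier),
    ContinuousOn g {X | InPolyball Λ X} ∧
    ∀ X, InOpenPolyball Λ X → g X = holoEval a X

end holo

/-! ## characteristic functions -/

section charfn

variable {H : Type*} [NormedAddCommGroup H] [InnerProductSpace ℂ H] [CompleteSpace H]

/-- `T` admits a characteristic function: there are a Hilbert space `E` and a multi-analytic
operator `Ψ : ℓ²⊗E → ℓ²⊗D(T)` with `K_T K_T^* + Ψ Ψ^* = I`. -/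
def AdmitsCharFn (S : ∀ i, Fin (n i) → L2 n ℂ →L[ℂ] L2 n ℂ)
    (T : ∀ i, Fin (n i) → H →L[ℂ] H)
    (K : H →L[ℂ] L2 n (DTcar T))
    (SD : ∀ i, Fin (n i) → L2 n (DTcar T) →L[ℂ] L2 n (DTcar T)) : Prop :=
  ∃ (P : HilbertPkg) (SE : ∀ i, Fin (n i) → L2 n P.carrier →L[ℂ] L2 n P.carrier),
    (∀ i s, IsAmpliation (S i s) (SE i s)) ∧
    ∃ Ψ : L2 n P.carrier →L[ℂ] L2 n (DTcar T),
      MultiAnalytic SE SD Ψ ∧ K ∘L adj K + Ψ ∘L adj Ψ = 1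

/-- the operator `I - K_T K_T^*`. -/
def QOp (T : ∀ i, Fin (n i) → H →L[ℂ] H) (K : H →L[ℂ] L2 n (DTcar T)) :
    L2 n (DTcar T) →L[ℂ] L2 n (DTcar T) :=
  1 - K ∘L adj K

/-- the space `M_T`, the closure of the range of `I - K_T K_T^*`. -/
def MTspace (T : ∀ i, Fin (n i) → H →L[ℂ] H) (K : H →L[ℂ] L2 n (DTcar T)) :
    Submodule ℂ (L2 n (DTcar T)) :=
  (LinearMap.range (QOp T K : L2 n (DTcar T) →ₗ[ℂ] L2 n (DTcar T))).topologicalClosure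

/-- the space `M_T` as a Hilbert space in its own right. -/
def MTcar (T : ∀ i, Fin (n i) → H →L[ℂ] H) (K : H →L[ℂ] L2 n (DTcar T)) : Type _ :=
  ↥(MTspace T K)

instance (T : ∀ i, Fin (n i) → H →L[ℂ] H) (K : H →L[ℂ] L2 n (DTcar T)) :
    NormedAddCommGroup (MTcar T K) :=
  inferInstanceAs (NormedAddCommGroup ↥(MTspace T K))
instance (T : ∀ i, Fin (n i) → H →L[ℂ] H) (K : H →L[ℂ] L2 n (DTcar T)) :
    InnerProductSpace ℂ (MTcar T K) :=
  inferInstanceAs (InnerProductSpace ℂ ↥(MTspace T K))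
instance (T : ∀ i, Fin (n i) → H →L[ℂ] H) (K : H →L[ℂ] L2 n (DTcar T)) :
    CompleteSpace (MTcar T K) :=
  inferInstanceAs (CompleteSpace ↥((LinearMap.range (QOp T K : L2 n (DTcar T) →ₗ[ℂ] L2 n (DTcar T))).topologicalClosure))

/-- the inclusion `M_T ↪ ℓ²⊗D(T)`. -/
def inclMT (T : ∀ i, Fin (n i) → H →L[ℂ] H) (K : H →L[ℂ] L2 n (DTcar T)) :
    MTcar T K →L[ℂ] L2 n (DTcar T) :=
  (MTspace T K).subtypeL

/-- the characteristic function `Θ_T = (I - K_T K_T^*)^{1/2} K_{M_T}^*`, built from a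
square root `Qh` of `I - K_T K_T^*` and the Berezin kernel `KM` of the tuple `M_T`. -/
def ThetaOf {E : Type*} [NormedAddCommGroup E] [InnerProductSpace ℂ E] [CompleteSpace E]
    (T : ∀ i, Fin (n i) → H →L[ℂ] H) (K : H →L[ℂ] L2 n (DTcar T))
    (Qh : L2 n (DTcar T) →L[ℂ] L2 n (DTcar T))
    (KM : MTcar T K →L[ℂ] L2 n E) :
    L2 n E →L[ℂ] L2 n (DTcar T) :=
  Qh ∘L inclMT T K ∘L adj KM

end charfn


/-!
Each `S_{i,s}` is a weighted shift of the basis `χ_α`: it sends `χ_α` to a unimodular multiple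
of `χ_{α'}`, where `α'` is `α` with `g_s` prepended to its `i`-th word, and `α ↦ α'` is injective.
Hence `S_{i,s}^*` deletes a leading `g_s` from the `i`-th word (and kills `χ_α` otherwise), which
gives the isometry, orthogonality and row-sum identities. For `i ≠ j`, both sides of the
`Λ`-commutation relation move `χ_α` to the same basis vector, and the scalars agree because
prepending to the `j`-th word changes the twist of `S_{i,s}` by `λ_{ij}(s,t)` exactly when
`j < i`, while `λ_{ji}(t,s) = conj λ_{ij}(s,t)`.
-/

open scoped lp

section WeightedShift

variable {ι ι' : Type*} [DecidableEq ι] [DecidableEq ι']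

lemma _root_.lp.ext_single {F : Type*} [AddCommMonoid F] [Module ℂ F] [TopologicalSpace F]
    [T2Space F] {A B : ℓ²(ι, ℂ) →L[ℂ] F} (h : ∀ a, A (lp.single 2 a 1) = B (lp.single 2 a 1)) :
    A = B :=
  lp.ext_continuousLinearMap ENNReal.ofNat_ne_top fun a => ContinuousLinearMap.ext_ring (h a)

def IsWeightedShift (A : ℓ²(ι, ℂ) →L[ℂ] ℓ²(ι', ℂ)) (f : ι → ι') (c : ι → ℂ) : Prop :=
  ∀ a, A (lp.single 2 a 1) = c a • lp.single 2 (f a) 1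

namespace IsWeightedShift

variable {A : ℓ²(ι, ℂ) →L[ℂ] ℓ²(ι', ℂ)} {f : ι → ι'} {c : ι → ℂ}

lemma adjoint_apply (hA : IsWeightedShift A f c) (y : ℓ²(ι', ℂ)) (a : ι) :
    adjoint A y a = conj (c a) * y (f a) := by
  have h := adjoint_inner_right A (lp.single 2 a 1) y
  rw [hA, inner_smul_left, lp.inner_single_left, lp.inner_single_left] at h
  simpa using h

lemma adjoint_single (hA : IsWeightedShift A f c) (hf : f.Injective) (a : ι) :
    adjoint A (lp.single 2 (f a) 1) = conj (c a) • lp.single 2 a 1 := by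
  ext b
  simp only [hA.adjoint_apply, lp.coeFn_smul, Pi.smul_apply, lp.single_apply, Pi.single_apply,
    hf.eq_iff, smul_eq_mul]
  split_ifs with h <;> simp [h]

lemma adjoint_single_of_forall_ne (hA : IsWeightedShift A f c) {b : ι'} (hb : ∀ a, f a ≠ b) :
    adjoint A (lp.single 2 b 1) = 0 := by
  ext a
  simp [hA.adjoint_apply, lp.single_apply, hb a]

lemma apply_adjoint_single (hA : IsWeightedShift A f c) (hf : f.Injective)
    (hc : ∀ a, ‖c a‖ = 1) (a : ι) :
    A (adjoint A (lp.single 2 (f a) 1)) = lp.single 2 (f a) 1 := by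
  rw [hA.adjoint_single hf, map_smul, hA, smul_smul, mul_comm, RCLike.mul_conj, hc]
  simp

lemma adjoint_comp_self (hA : IsWeightedShift A f c) (hf : f.Injective) (hc : ∀ a, ‖c a‖ = 1) :
    adjoint A ∘L A = 1 :=
  lp.ext_single fun a => by
    rw [comp_apply, hA, map_smul, hA.adjoint_single hf, smul_smul, RCLike.mul_conj, hc]
    simp

end IsWeightedShift

end WeightedShift

def consAt (i : Fin k) (s : Fin (n i)) (α : Word n) : Word n :=
  Function.update α i (s :: α i)

section consAt

variable {i j : Fin k} {s : Fin (n i)} {t : Fin (n j)} {α : Word n}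

@[simp]
lemma consAt_self : consAt i s α i = s :: α i :=
  Function.update_self ..

lemma consAt_of_ne (h : j ≠ i) : consAt i s α j = α j :=
  Function.update_of_ne h ..

lemma consAt_injective : (consAt i s).Injective := by
  intro α β h
  funext j
  rcases eq_or_ne j i with rfl | hj
  · simpa using congr_fun h j
  · simpa [consAt_of_ne hj] using congr_fun h j

lemma exists_consAt_eq_iff : (∃ β, consAt i s β = α) ↔ (α i).head? = some s := by
  refine ⟨fun ⟨β, hβ⟩ => by simp [← hβ], fun h => ⟨Function.update α i (α i).tail, ?_⟩⟩
  funext j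
  rcases eq_or_ne j i with rfl | hj
  · simpa using List.cons_head?_tail h
  · simp [consAt_of_ne hj, hj]

lemma consAt_comm (hij : i ≠ j) : consAt i s (consAt j t α) = consAt j t (consAt i s α) := by
  unfold consAt
  rw [Function.update_of_ne hij, Function.update_of_ne hij.symm]
  exact (Function.update_comm hij ..).symm

end consAt

variable (Λ : LambdaData n)

lemma norm_boldLam (i j : Fin k) (s : Fin (n i)) (β : List (Fin (n j))) :
    ‖boldLam Λ i j s β‖ = 1 := by
  induction β with
  | nil => simp [boldLam]
  | cons t β ih => simp_all [boldLam, Λ.unimodular]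

lemma norm_twist (i : Fin k) (s : Fin (n i)) (α : Word n) : ‖twist Λ i s α‖ = 1 := by
  simp [twist, norm_prod, apply_ite, norm_boldLam]

lemma twist_consAt (i j : Fin k) (s : Fin (n i)) (t : Fin (n j)) (α : Word n) :
    twist Λ i s (consAt j t α) = (if j < i then Λ.lam i j s t else 1) * twist Λ i s α := by
  unfold twist
  rw [← Finset.mul_prod_erase Finset.univ _ (Finset.mem_univ j),
    ← Finset.mul_prod_erase Finset.univ _ (Finset.mem_univ j),
    Finset.prod_congr rfl fun j' hj' => by rw [consAt_of_ne (Finset.ne_of_mem_erase hj')],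
    consAt_self]
  split_ifs <;> simp [boldLam, mul_assoc]

lemma twist_consAt_mul_conj_twist_consAt {i j : Fin k} (hij : i ≠ j) (s : Fin (n i))
    (t : Fin (n j)) (β : Word n) :
    twist Λ j t (consAt i s β) * conj (twist Λ i s (consAt j t β)) =
      conj (Λ.lam i j s t) * (conj (twist Λ i s β) * twist Λ j t β) := by
  rw [twist_consAt, twist_consAt]
  rcases hij.lt_or_gt with h | h
  · simp only [h, h.not_gt, if_true, if_false, Λ.hermitian i j s t hij, one_mul]
    ring
  · simp only [h, h.not_gt, if_true, if_false, map_mul, one_mul]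
    ring

namespace IsTwistedShift

variable {Λ} {S : ∀ i, Fin (n i) → L2 n ℂ →L[ℂ] L2 n ℂ}

lemma isWeightedShift (hS : IsTwistedShift Λ S) (i : Fin k) (s : Fin (n i)) :
    IsWeightedShift (S i s) (consAt i s) (twist Λ i s) :=
  hS i s

lemma adjoint_comp_self (hS : IsTwistedShift Λ S) (i : Fin k) (s : Fin (n i)) :
    adjoint (S i s) ∘L S i s = 1 :=
  (hS.isWeightedShift i s).adjoint_comp_self consAt_injective (norm_twist Λ i s)

lemma adjoint_comp_of_ne (hS : IsTwistedShift Λ S) {i : Fin k} {s t : Fin (n i)}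
    (hst : s ≠ t) :
    adjoint (S i s) ∘L S i t = 0 :=
  lp.ext_single fun α => by
    rw [comp_apply, hS.isWeightedShift i t, map_smul,
      (hS.isWeightedShift i s).adjoint_single_of_forall_ne fun β h => hst ?_, smul_zero,
      zero_apply]
    exact (by simpa using congr_fun h i : s = t ∧ _).1

lemma apply_adjoint_chi (hS : IsTwistedShift Λ S) (i : Fin k) (s : Fin (n i)) (α : Word n) :
    S i s (adjoint (S i s) (chi α)) = if (α i).head? = some s then chi α else 0 := by
  split_ifs with h
  · obtain ⟨β, rfl⟩ := exists_consAt_eq_iff.2 h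
    exact (hS.isWeightedShift i s).apply_adjoint_single consAt_injective (norm_twist Λ i s) β
  · rw [chi, (hS.isWeightedShift i s).adjoint_single_of_forall_ne fun β hβ =>
      h (exists_consAt_eq_iff.1 ⟨β, hβ⟩), map_zero]

lemma sum_apply_adjoint_chi (hS : IsTwistedShift Λ S) (i : Fin k) (α : Word n) :
    ∑ s, S i s (adjoint (S i s) (chi α)) = if α i = [] then 0 else chi α := by
  simp only [hS.apply_adjoint_chi]
  cases α i <;> simp

lemma adjoint_comp_comm (hS : IsTwistedShift Λ S) {i j : Fin k} (hij : i ≠ j) (s : Fin (n i))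
    (t : Fin (n j)) :
    adjoint (S i s) ∘L S j t = conj (Λ.lam i j s t) • (S j t ∘L adjoint (S i s)) :=
  lp.ext_single fun α => by
    have hi := hS.isWeightedShift i s
    have hj := hS.isWeightedShift j t
    simp only [comp_apply, smul_apply]
    by_cases h : (α i).head? = some s
    · obtain ⟨β, rfl⟩ := exists_consAt_eq_iff.2 h
      rw [hj, map_smul, consAt_comm hij.symm, hi.adjoint_single consAt_injective,
        hi.adjoint_single consAt_injective, map_smul, hj, smul_smul, smul_smul, smul_smul,
        twist_consAt_mul_conj_twist_consAt Λ hij, mul_assoc]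
    · have hα : ∀ β, consAt i s β ≠ α := fun β hβ => h (exists_consAt_eq_iff.1 ⟨β, hβ⟩)
      have hjα : ∀ β, consAt i s β ≠ consAt j t α := fun β hβ =>
        h (by simpa [consAt_of_ne hij] using exists_consAt_eq_iff.1 ⟨β, hβ⟩)
      rw [hj, map_smul, hi.adjoint_single_of_forall_ne hα, hi.adjoint_single_of_forall_ne hjα,
        map_zero, smul_zero, smul_zero]

end IsTwistedShift

/-- The twisted shifts `S_{i,s}` are isometries with pairwise orthogonal
ranges for each fixed `i`; each `𝐒_i` is a row isometry (computed on basis vectors); and the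
tuple `𝐒 = (𝐒_1,…,𝐒_k)` is doubly `Λ`-commuting. -/
theorem statement_0 {k : ℕ} {n : Fin k → ℕ} (Λ : LambdaData n)
    (S : ∀ i, Fin (n i) → L2 n ℂ →L[ℂ] L2 n ℂ) (hS : IsTwistedShift Λ S) :
    (∀ (i : Fin k) (s : Fin (n i)) (x : L2 n ℂ), ‖S i s x‖ = ‖x‖) ∧
    (∀ (i : Fin k) (s t : Fin (n i)), s ≠ t →
      ∀ x y : L2 n ℂ, ⟪S i s x, S i t y⟫_ℂ = 0) ∧
    (∀ (i : Fin k) (α : Word n),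
      (∑ s : Fin (n i), S i s (adj (S i s) (chi α))) =
        if α i = [] then 0 else chi α) ∧
    (∀ i j : Fin k, i ≠ j → ∀ (s : Fin (n i)) (t : Fin (n j)),
      adj (S i s) ∘L S j t =
        (starRingEnd ℂ) (Λ.lam i j s t) • (S j t ∘L adj (S i s))) := by
  refine ⟨fun i s => (norm_map_iff_adjoint_comp_self _).2 (hS.adjoint_comp_self i s),
    fun i s t hst x y => ?_, hS.sum_apply_adjoint_chi, fun i j hij => hS.adjoint_comp_comm hij⟩
  rw [← adjoint_inner_right, ← comp_apply, hS.adjoint_comp_of_ne hst, zero_apply,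
    inner_zero_right]

end Polyball
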